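/- arXiv:cs/0506008 — 2 statements merged into one kernel-verified Lean document; each statement's English description precedes it below -/
import Mathlib

section
/- Let t ⋈ c be a normalized (in)equation with ⋈ ∈ {=,≠,<,≤,>,≥} and gcd(t) = 1, let A^{t⋈c}_{(m,n)} be the DFA with m = max{q ∈ ℤ : q is small} and n = min{q ∈ ℤ : q is large}, and let S := {s ∈ ℤ : −||t||^+ < s < ||t||^−}. Then every state q ∈ {m,…,n} is reachable from every state p ∈ S. -/
/-!
Reading, from an integer state `p`, a word whose tracks encode `v ∈ [0, ρ^L)^r` leads to
`ρ^L p + t[v]` as long as no clamping occurs, and no clamping occurs when this endpoint lies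
strictly between `m` and `n`: since `t` takes values in `[-‖t‖⁻ W, ‖t‖⁺ W]` on `[0, W]^r`, every
intermediate state is then strictly between `m` and `n` as well. Because `gcd(t) = 1`, the
values of `t` on `[0, V]^r` fill the band `[-‖t‖⁻ V + C, ‖t‖⁺ V - C]`: approximate the target
within `‖t‖⁺ + ‖t‖⁻` by a vector that is constant on the positive and on the negative
coefficients, then correct the error along a Bézout vector `a` with `t[a] = 1`. For `p ∈ S`
and `L` large, `q - ρ^L p` lies in that band. Finally `m` and `n` are reached from `m + 1` and
`n - 1` by the letter with digit `ρ - 1` exactly on the negative, resp. positive, coefficients.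
-/

namespace Presburger

/-- A letter of the alphabet `Σ^r`, where `Σ = {0, …, ρ-1}`. -/
abbrev Letter (ρ r : ℕ) := Fin r → Fin ρ

/-- The natural number encoded by a word over `Σ` (most significant digit first). -/
def natVal (ρ : ℕ) (w : List ℕ) : ℕ := w.foldl (fun acc b => ρ * acc + b) 0

/-- The integer encoded by a nonempty word over `Σ` (ρ's complement,
most significant digit first); the empty word gets the junk value `0`. -/
def intVal (ρ : ℕ) : List ℕ → ℤ
  | [] => 0
  | b :: u => (natVal ρ u : ℤ) - (if b = 0 then 0 else (ρ : ℤ) ^ u.length)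

/-- The tuple of natural numbers encoded track-wise by a word over `Σ^r` (as integers). -/
def natVec (ρ r : ℕ) (w : List (Letter ρ r)) : Fin r → ℤ :=
  fun i => (natVal ρ (w.map fun b => (b i : ℕ)) : ℤ)

/-- The tuple of integers encoded track-wise by a nonempty word over `Σ^r`. -/
def intVec (ρ r : ℕ) (w : List (Letter ρ r)) : Fin r → ℤ :=
  fun i => intVal ρ (w.map fun b => (b i : ℕ))

/-- A language over `Σ^r` represents a set `U ⊆ ℤ^r` if it consists exactly of the
nonempty words encoding a member of `U`. -/
def Represents (ρ r : ℕ) (L : Language (Letter ρ r)) (U : Set (Fin r → ℤ)) : Prop :=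
  ∀ w : List (Letter ρ r), w ∈ L ↔ (w ≠ [] ∧ intVec ρ r w ∈ U)

/-- A DFA represents `U ⊆ ℤ^r` if its accepted language does. -/
def DFARepresents (ρ r : ℕ) {σ : Type*} (M : DFA (Letter ρ r) σ) (U : Set (Fin r → ℤ)) : Prop :=
  Represents ρ r M.accepts U

/-- Value of the homogeneous term with coefficients `k` at the point `a`. -/
def tval {r : ℕ} (k : Fin r → ℤ) (a : Fin r → ℤ) : ℤ := ∑ i, k i * a i

/-- A homogeneous term is `0` or has all its coefficients nonzero. -/
def Homog {r : ℕ} (k : Fin r → ℤ) : Prop := k = 0 ∨ ∀ i, k i ≠ 0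

/-- `σ(b)`: componentwise `0` if the digit is `0` and `-1` otherwise. -/
def sgnLetter {ρ r : ℕ} (b : Letter ρ r) : Fin r → ℤ :=
  fun i => if (b i : ℕ) = 0 then 0 else -1

/-- The letter `b` viewed as a tuple of integers. -/
def letterInt {ρ r : ℕ} (b : Letter ρ r) : Fin r → ℤ := fun i => ((b i : ℕ) : ℤ)

/-- `‖t‖⁺`: the sum of the positive coefficients of `t`. -/
def posNorm {r : ℕ} (k : Fin r → ℤ) : ℤ := ∑ i, max (k i) 0

/-- `‖t‖⁻`: the sum of the absolute values of the negative coefficients of `t`. -/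
def negNorm {r : ℕ} (k : Fin r → ℤ) : ℤ := ∑ i, max (-k i) 0

/-- `gcd(t)`: the gcd of the absolute values of the coefficients of `t`. -/
def gcdT {r : ℕ} (k : Fin r → ℤ) : ℕ := Finset.univ.gcd fun i => (k i).natAbs

/-- The transition function `η` of the infinite-state automaton for `t`,
restricted to the integer states: `η(q, b) = ρ·q + t[b]`. -/
def etaStep (ρ : ℕ) {r : ℕ} (k : Fin r → ℤ) (q : ℤ) (b : Letter ρ r) : ℤ :=
  ρ * q + tval k (letterInt b)

/-- The transition of `η` out of the initial state: `η(q_I, b) = t[σ(b)]`. -/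
def etaInit (ρ : ℕ) {r : ℕ} (k : Fin r → ℤ) (b : Letter ρ r) : ℤ :=
  tval k (sgnLetter b)

/-- A state `q` is small (for `t ⋈ c`) if `q < min{c, -‖t‖⁺}`. -/
def IsSmall {r : ℕ} (k : Fin r → ℤ) (c q : ℤ) : Prop := q < min c (-posNorm k)

/-- A state `q` is large (for `t ⋈ c`) if `q > max{c, ‖t‖⁻}`. -/
def IsLarge {r : ℕ} (k : Fin r → ℤ) (c q : ℤ) : Prop := max c (negNorm k) < q

/-- The six relations `=, ≠, <, ≤, >, ≥` on `ℤ`. -/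
def rel6 : Set (ℤ → ℤ → Prop) :=
  {fun x y => x = y, fun x y => x ≠ y, fun x y => x < y,
   fun x y => x ≤ y, fun x y => x > y, fun x y => x ≥ y}

/-- Clamp an integer into the state set `{m, …, n}`; yields `none` (the initial state)
only in the degenerate case `m > n`, which never occurs for small `m` and large `n`. -/
noncomputable def clampSt (m n x : ℤ) : Option ↥(Finset.Icc m n) :=
  if h : max m (min n x) ∈ Finset.Icc m n then some ⟨max m (min n x), h⟩ else none

/-- The DFA `A^{t ⋈ c}_{(m,n)}` for the (in)equation `t ⋈ c`: states are
`q_I = none` together with `{m, …, n}`, transitions clamp `η` to `[m, n]`, and the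
accepting states are the integer states `q` with `q ⋈ c`. -/
noncomputable def ineqDFA (ρ : ℕ) {r : ℕ} (k : Fin r → ℤ) (m n : ℤ) (rel : ℤ → ℤ → Prop) (c : ℤ) :
    DFA (Letter ρ r) (Option ↥(Finset.Icc m n)) where
  step q b :=
    match q with
    | none => clampSt m n (etaInit ρ k b)
    | some z => clampSt m n (etaStep ρ k z.val b)
  start := none
  accept := {q | ∃ z : ↥(Finset.Icc m n), q = some z ∧ rel z.val c}

/-- Two states of a DFA are equivalent if they accept exactly the same words. -/
def stEquiv {α : Type*} {σ : Type*} (M : DFA α σ) (p q : σ) : Prop :=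
  ∀ w : List α, (M.evalFrom p w ∈ M.accept ↔ M.evalFrom q w ∈ M.accept)

end Presburger

namespace Presburger

variable {r : ℕ}

lemma exists_mul_le_le_mul_add {l B W z : ℤ} (hl : 0 ≤ l) (hBW : B ≤ W)
    (hlo : l * B ≤ z) (hhi : z ≤ l * W) :
    ∃ x, B ≤ x ∧ x ≤ W ∧ l * x ≤ z ∧ z ≤ l * x + l := by
  rcases hl.eq_or_lt with rfl | hl
  · exact ⟨B, le_rfl, hBW, by simp_all, by simp_all⟩
  · refine ⟨z / l, Int.le_ediv_of_mul_le hl (by linarith), Int.ediv_le_of_le_mul hl (by linarith),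
      by linarith [Int.ediv_mul_le z hl.ne'], (Int.lt_mul_ediv_self_add hl).le⟩

section Term

variable (k : Fin r → ℤ)

lemma posNorm_nonneg : 0 ≤ posNorm k :=
  Finset.sum_nonneg fun _ _ => le_max_right _ _

lemma negNorm_nonneg : 0 ≤ negNorm k :=
  Finset.sum_nonneg fun _ _ => le_max_right _ _

lemma tval_add_smul (w a : Fin r → ℤ) (e : ℤ) :
    tval k (w + e • a) = tval k w + e * tval k a := by
  simp only [tval, Pi.add_apply, Pi.smul_apply, smul_eq_mul, mul_add,
    Finset.sum_add_distrib, Finset.mul_sum]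
  congr 1
  exact Finset.sum_congr rfl fun _ _ => by ring

lemma tval_ite_pos (x y : ℤ) :
    tval k (fun i => if 0 < k i then x else y) = posNorm k * x - negNorm k * y := by
  simp only [tval, posNorm, negNorm, Finset.sum_mul, ← Finset.sum_sub_distrib]
  refine Finset.sum_congr rfl fun i _ => ?_
  split_ifs with h
  · rw [max_eq_left h.le, max_eq_right (by omega)]; ring
  · rw [max_eq_right (by omega), max_eq_left (by omega)]; ring

lemma tval_le_posNorm_mul {v : Fin r → ℤ} {W : ℤ} (hv : ∀ i, 0 ≤ v i ∧ v i ≤ W) :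
    tval k v ≤ posNorm k * W := by
  rw [posNorm, Finset.sum_mul]
  refine Finset.sum_le_sum fun i _ => ?_
  obtain ⟨h0, hW⟩ := hv i
  rcases le_total (k i) 0 with h | h
  · rw [max_eq_right h]; nlinarith
  · rw [max_eq_left h]; nlinarith

lemma neg_negNorm_mul_le_tval {v : Fin r → ℤ} {W : ℤ} (hv : ∀ i, 0 ≤ v i ∧ v i ≤ W) :
    -(negNorm k * W) ≤ tval k v := by
  rw [negNorm, Finset.sum_mul, ← Finset.sum_neg_distrib]
  refine Finset.sum_le_sum fun i _ => ?_
  obtain ⟨h0, hW⟩ := hv i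
  rcases le_total (k i) 0 with h | h
  · rw [max_eq_left (by omega)]; nlinarith
  · rw [max_eq_right (by omega)]; nlinarith

lemma exists_tval_eq_one (hgcd : gcdT k = 1) : ∃ a, tval k a = 1 := by
  obtain ⟨a, ha⟩ := Finset.gcd_eq_sum_mul Finset.univ k
  have hdvd : (Finset.univ.gcd k).natAbs ∣ gcdT k :=
    Finset.dvd_gcd fun i _ => Int.natAbs_dvd_natAbs.2 (Finset.gcd_dvd (Finset.mem_univ i))
  rw [hgcd, Nat.dvd_one] at hdvd
  have hnonneg : 0 ≤ Finset.univ.gcd k := Finset.Int.finsetGcd_nonneg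
  exact ⟨a, by rw [tval, ← ha]; omega⟩

lemma exists_tval_near {B W z : ℤ} (hBW : B ≤ W)
    (hlo : posNorm k * B - negNorm k * W ≤ z) (hhi : z ≤ posNorm k * W - negNorm k * B) :
    ∃ w : Fin r → ℤ, (∀ i, B ≤ w i ∧ w i ≤ W) ∧ |z - tval k w| ≤ posNorm k + negNorm k := by
  have hPBW := mul_le_mul_of_nonneg_left hBW (posNorm_nonneg k)
  have hNBW := mul_le_mul_of_nonneg_left hBW (negNorm_nonneg k)
  -- split `z = z₁ - z₂` with `z₁` in the range of `‖t‖⁺ x` and `z₂` in that of `‖t‖⁻ y`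
  obtain ⟨x, hBx, hxW, hx₁, hx₂⟩ := exists_mul_le_le_mul_add (posNorm_nonneg k) hBW
    (le_max_left _ (z + negNorm k * B)) (max_le hPBW (by linarith))
  obtain ⟨y, hBy, hyW, hy₁, hy₂⟩ := exists_mul_le_le_mul_add (negNorm_nonneg k) hBW
    (z := max (posNorm k * B) (z + negNorm k * B) - z)
    (by linarith [le_max_right (posNorm k * B) (z + negNorm k * B)])
    (by rw [sub_le_iff_le_add]; exact max_le (by linarith) (by linarith))
  refine ⟨fun i => if 0 < k i then x else y, fun i => by dsimp only; split_ifs <;> omega, ?_⟩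
  rw [tval_ite_pos, abs_le]
  constructor <;> linarith

theorem exists_tval_eq_of_gcdT_eq_one (hgcd : gcdT k = 1) :
    ∃ C, ∀ V z : ℤ, C ≤ V → -(negNorm k * V) + C ≤ z → z ≤ posNorm k * V - C →
      ∃ v : Fin r → ℤ, (∀ i, 0 ≤ v i ∧ v i ≤ V) ∧ tval k v = z := by
  obtain ⟨a, ha⟩ := exists_tval_eq_one k hgcd
  have hK : 0 ≤ posNorm k + negNorm k := add_nonneg (posNorm_nonneg k) (negNorm_nonneg k)
  -- `B` bounds the correction `(z - t[w]) • a` of an approximate solution `w`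
  set B := (posNorm k + negNorm k) * ∑ i, |a i|
  have hB : 0 ≤ B := mul_nonneg hK (Finset.sum_nonneg fun i _ => abs_nonneg (a i))
  refine ⟨(posNorm k + negNorm k + 2) * B, fun V z hV hlo hhi => ?_⟩
  obtain ⟨w, hw, hzw⟩ := exists_tval_near k (B := B) (W := V - B) (z := z)
    (by nlinarith) (by nlinarith) (by nlinarith)
  refine ⟨w + (z - tval k w) • a, fun i => ?_, by rw [tval_add_smul, ha]; ring⟩
  have hai : |a i| ≤ ∑ j, |a j| :=
    Finset.single_le_sum (fun j _ => abs_nonneg (a j)) (Finset.mem_univ i)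
  have hcorr : |(z - tval k w) * a i| ≤ B := by
    rw [abs_mul]; exact mul_le_mul hzw hai (abs_nonneg _) hK
  simp only [Pi.add_apply, Pi.smul_apply, smul_eq_mul]
  rw [abs_le] at hcorr
  constructor <;> linarith [hw i]

end Term

section Automaton

variable {m n : ℤ}

lemma clampSt_eq_some {x : ℤ} (h1 : m ≤ x) (h2 : x ≤ n) :
    clampSt m n x = some ⟨x, Finset.mem_Icc.2 ⟨h1, h2⟩⟩ := by
  simp only [clampSt, min_eq_right h2, max_eq_right h1, dif_pos (Finset.mem_Icc.2 ⟨h1, h2⟩)]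

lemma clampSt_of_le {x : ℤ} (h : x ≤ m) : clampSt m n x = clampSt m n m := by
  simp only [clampSt, max_eq_left (min_le_of_right_le h), max_eq_left (min_le_right n m)]

lemma clampSt_of_ge {x : ℤ} (h : n ≤ x) : clampSt m n x = clampSt m n n := by
  simp only [clampSt, min_eq_left h, min_self]

lemma mem_Ioo_of_mul_add_tval_mem_Ioo {k : Fin r → ℤ} (hm : m < -posNorm k)
    (hn : negNorm k < n) {a x : ℤ} {v : Fin r → ℤ} (ha : 0 < a)
    (hv : ∀ i, 0 ≤ v i ∧ v i ≤ a - 1) (h1 : m < a * x + tval k v) (h2 : a * x + tval k v < n) :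
    m < x ∧ x < n := by
  have hup := tval_le_posNorm_mul k hv
  have hlow := neg_negNorm_mul_le_tval k hv
  constructor
  · by_contra! hx
    nlinarith [mul_le_mul_of_nonneg_left hx ha.le]
  · by_contra! hx
    nlinarith [mul_le_mul_of_nonneg_left hx ha.le]

variable (ρ : ℕ) (k : Fin r → ℤ) (rel : ℤ → ℤ → Prop) (c : ℤ)

lemma ineqDFA_step_clampSt {x : ℤ} (h1 : m ≤ x) (h2 : x ≤ n) (b : Letter ρ r) :
    (ineqDFA ρ k m n rel c).step (clampSt m n x) b = clampSt m n (etaStep ρ k x b) := by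
  rw [clampSt_eq_some h1 h2]
  rfl

lemma exists_evalFrom_eq_clampSt_pow_mul_add (hρ : 0 < ρ) (hm : m < -posNorm k)
    (hn : negNorm k < n) (p : ℤ) (L : ℕ) (v : Fin r → ℕ) (hv : ∀ i, v i < ρ ^ L)
    (h1 : m < (ρ : ℤ) ^ L * p + tval k (fun i => v i))
    (h2 : (ρ : ℤ) ^ L * p + tval k (fun i => v i) < n) :
    ∃ w, (ineqDFA ρ k m n rel c).evalFrom (clampSt m n p) w =
      clampSt m n ((ρ : ℤ) ^ L * p + tval k (fun i => v i)) := by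
  induction L generalizing v with
  | zero =>
    have hv0 : (fun i => (v i : ℤ)) = 0 := funext fun i => by simpa using hv i
    refine ⟨[], ?_⟩
    rw [hv0]
    simp [tval]
  | succ L ih =>
    -- peel off the least significant digit `b` of `v`
    let b : Letter ρ r := fun i => ⟨v i % ρ, Nat.mod_lt _ hρ⟩
    set y := (ρ : ℤ) ^ L * p + tval k (fun i => ((v i / ρ : ℕ) : ℤ))
    have hsplit : (ρ : ℤ) ^ (L + 1) * p + tval k (fun i => v i) =
        ρ * y + tval k (letterInt b) := by
      have hdigits : ∀ i, (v i : ℤ) = ρ * ((v i / ρ : ℕ) : ℤ) + ((v i % ρ : ℕ) : ℤ) :=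
        fun i => by exact_mod_cast (Nat.div_add_mod (v i) ρ).symm
      simp only [y, b, tval, letterInt, hdigits, mul_add, Finset.sum_add_distrib, Finset.mul_sum]
      ring_nf
    have hb : ∀ i, 0 ≤ letterInt b i ∧ letterInt b i ≤ ρ - 1 := fun i =>
      ⟨Int.natCast_nonneg _, by have := Nat.mod_lt (v i) hρ; simp only [letterInt, b]; omega⟩
    rw [hsplit] at h1 h2 ⊢
    obtain ⟨hy1, hy2⟩ := mem_Ioo_of_mul_add_tval_mem_Ioo hm hn (by exact_mod_cast hρ) hb h1 h2
    obtain ⟨w, hw⟩ := ih (fun i => v i / ρ)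
      (fun i => Nat.div_lt_of_lt_mul (by rw [← pow_succ']; exact hv i)) hy1 hy2
    refine ⟨w ++ [b], ?_⟩
    rw [DFA.evalFrom_append_singleton, hw, ineqDFA_step_clampSt _ _ _ _ hy1.le hy2.le]
    rfl

theorem exists_evalFrom_clampSt_of_mem_Ioo (hρ : 2 ≤ ρ) (hgcd : gcdT k = 1)
    (hm : m < -posNorm k) (hn : negNorm k < n) {p q : ℤ} (hp1 : -posNorm k < p)
    (hp2 : p < negNorm k) (hq1 : m < q) (hq2 : q < n) :
    ∃ w, (ineqDFA ρ k m n rel c).evalFrom (clampSt m n p) w = clampSt m n q := by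
  obtain ⟨C, hC⟩ := exists_tval_eq_of_gcdT_eq_one k hgcd
  set L := (C + |q| + posNorm k + negNorm k).toNat
  set V : ℤ := (ρ : ℤ) ^ L - 1 with hV
  have hLV : C + |q| + posNorm k + negNorm k ≤ V ∧ 0 ≤ V := by
    have hL : (L : ℤ) < (ρ : ℤ) ^ L := by exact_mod_cast Nat.lt_pow_self (n := L) hρ
    have := Int.self_le_toNat (C + |q| + posNorm k + negNorm k)
    omega
  -- `q - ρ^L p` lies in the band of values of `t` on `[0, V]^r` because `p ∈ S`
  have hpN : (V + 1) * p ≤ V * negNorm k - V + negNorm k - 1 := by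
    nlinarith [mul_le_mul_of_nonneg_left (show p ≤ negNorm k - 1 by omega) hLV.2]
  have hpP : V + 1 - V * posNorm k - posNorm k ≤ (V + 1) * p := by
    nlinarith [mul_le_mul_of_nonneg_left (show 1 - posNorm k ≤ p by omega) hLV.2]
  obtain ⟨v, hv, hvq⟩ := hC V (q - (V + 1) * p)
    (by linarith [abs_nonneg q, posNorm_nonneg k, negNorm_nonneg k])
    (by linarith [posNorm_nonneg k, neg_abs_le q])
    (by linarith [negNorm_nonneg k, le_abs_self q])
  have hvnat : tval k (fun i => ((v i).toNat : ℤ)) = tval k v := by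
    congr 1
    exact funext fun i => Int.toNat_of_nonneg (hv i).1
  have hq_eq : (ρ : ℤ) ^ L * p + tval k (fun i => ((v i).toNat : ℤ)) = q := by
    rw [hvnat, hvq, hV]
    ring
  have hvlt : ∀ i, (v i).toNat < ρ ^ L := fun i => by
    have := (hv i).2
    zify
    omega
  rw [← hq_eq] at hq1 hq2 ⊢
  exact exists_evalFrom_eq_clampSt_pow_mul_add ρ k rel c (by omega) hm hn p L _ hvlt hq1 hq2

lemma etaStep_ite_pos (s : ℤ) (x y : Fin ρ) :
    etaStep ρ k s (fun i => if 0 < k i then x else y) =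
      ρ * s + (posNorm k * x - negNorm k * y) := by
  rw [etaStep, ← tval_ite_pos]
  congr 2
  funext i
  simp only [letterInt]
  split_ifs <;> rfl

lemma exists_step_clampSt_pred_eq (hρ : 2 ≤ ρ) (hmn : m < n) (h : 3 ≤ n + posNorm k) :
    ∃ b, (ineqDFA ρ k m n rel c).step (clampSt m n (n - 1)) b = clampSt m n n := by
  refine ⟨fun i => if 0 < k i then ⟨ρ - 1, by omega⟩ else ⟨0, by omega⟩, ?_⟩
  rw [ineqDFA_step_clampSt _ _ _ _ (by omega) (by omega), clampSt_of_ge]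
  rw [etaStep_ite_pos]
  push_cast [Nat.cast_sub (by omega : 1 ≤ ρ)]
  nlinarith [mul_le_mul_of_nonneg_left h (show (0 : ℤ) ≤ ρ - 1 by omega)]

lemma exists_step_clampSt_succ_eq (hρ : 2 ≤ ρ) (hmn : m < n) (h : m + 3 ≤ negNorm k) :
    ∃ b, (ineqDFA ρ k m n rel c).step (clampSt m n (m + 1)) b = clampSt m n m := by
  refine ⟨fun i => if 0 < k i then ⟨0, by omega⟩ else ⟨ρ - 1, by omega⟩, ?_⟩
  rw [ineqDFA_step_clampSt _ _ _ _ (by omega) (by omega), clampSt_of_le]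
  rw [etaStep_ite_pos]
  push_cast [Nat.cast_sub (by omega : 1 ≤ ρ)]
  nlinarith [mul_le_mul_of_nonneg_left h (show (0 : ℤ) ≤ ρ - 1 by omega)]

end Automaton

theorem stmt_7_general (ρ r : ℕ) (hρ : 2 ≤ ρ) (k : Fin r → ℤ)
    (hgcd : gcdT k = 1)
    (rel : ℤ → ℤ → Prop) (c : ℤ)
    (m n : ℤ) (hm : m = min c (-posNorm k) - 1) (hn : n = max c (negNorm k) + 1)
    (p : ℤ) (hp1 : -posNorm k < p) (hp2 : p < negNorm k)
    (q : ℤ) (hq : q ∈ Finset.Icc m n) :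
    ∃ w : List (Letter ρ r),
      (ineqDFA ρ k m n rel c).evalFrom (clampSt m n p) w = some ⟨q, hq⟩ := by
  have hmP : m < -posNorm k := by have := min_le_right c (-posNorm k); omega
  have hNn : negNorm k < n := by have := le_max_right c (negNorm k); omega
  have reach {q : ℤ} (hq1 : m < q) (hq2 : q < n) :=
    exists_evalFrom_clampSt_of_mem_Ioo ρ k rel c hρ hgcd hmP hNn hp1 hp2 hq1 hq2
  obtain ⟨hmq, hqn⟩ := Finset.mem_Icc.1 hq
  rw [← clampSt_eq_some hmq hqn]
  rcases hmq.eq_or_lt with hqm | hmq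
  · rw [← hqm]
    obtain ⟨w, hw⟩ := reach (q := m + 1) (by omega) (by omega)
    obtain ⟨b, hb⟩ := exists_step_clampSt_succ_eq (m := m) (n := n) ρ k rel c hρ (by omega)
      (by omega)
    exact ⟨w ++ [b], by rw [DFA.evalFrom_append_singleton, hw, hb]⟩
  rcases hqn.eq_or_lt with hqn | hqn
  · rw [hqn]
    obtain ⟨w, hw⟩ := reach (q := n - 1) (by omega) (by omega)
    obtain ⟨b, hb⟩ := exists_step_clampSt_pred_eq (m := m) (n := n) ρ k rel c hρ (by omega)
      (by omega)
    exact ⟨w ++ [b], by rw [DFA.evalFrom_append_singleton, hw, hb]⟩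
  exact reach hmq hqn

/-- Lemma `S`.
In `A^{t ⋈ c}_{(m,n)}` with `gcd(t) = 1`, `m` the maximal small and `n` the
minimal large state, every integer state `q ∈ {m,…,n}` is reachable from every
state `p ∈ S = {s ∈ ℤ : −‖t‖⁺ < s < ‖t‖⁻}`.  (For `x ∈ [m,n]`, `clampSt m n x`
is precisely the integer state `x` of the automaton.) -/
theorem stmt_7 (ρ r : ℕ) (hρ : 2 ≤ ρ) (k : Fin r → ℤ) (hk : Homog k)
    (hgcd : gcdT k = 1)
    (rel : ℤ → ℤ → Prop) (hrel : rel ∈ rel6) (c : ℤ)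
    (m n : ℤ) (hm : m = min c (-posNorm k) - 1) (hn : n = max c (negNorm k) + 1)
    (p : ℤ) (hp1 : -posNorm k < p) (hp2 : p < negNorm k)
    (q : ℤ) (hq : q ∈ Finset.Icc m n) :
    ∃ w : List (Letter ρ r),
      (ineqDFA ρ k m n rel c).evalFrom (clampSt m n p) w = some ⟨q, hq⟩ :=
  stmt_7_general ρ r hρ k hgcd rel c m n hm hn p hp1 hp2 q hq

end Presburger
end

section
/- Let t be a homogeneous term in r variables with gcd(t) = 1 and let c ∈ ℤ. Every DFA representing the set {a ∈ ℤ^r : t[a] = c} has at least |S| states, where S := {s ∈ ℤ : −||t||^+ < s < ||t||^−}. -/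
/-!
For every `s ∈ ℤ` there is a word `w_s` with `t[⟨w_s⟩_ℤ] = s` (Bézout, since `gcd(t) = 1`), and
appending a word `u` of length `L` turns this value into `ρ^L s + t[⟨u⟩_ℕ]`. For `s ∈ S` and `L`
large, the target `c - ρ^L s` lies deep inside the range `[-‖t‖⁻ (ρ^L - 1), ‖t‖⁺ (ρ^L - 1)]` of
`t` on digit vectors, so some `u` sends `w_s u` into the set and every `w_{s'} u`, `s' ≠ s`, out
of it. Hence the states reached by the words `w_s`, `s ∈ S`, are pairwise distinct.
-/

namespace Presburger

open Finset

section Digits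

variable {ρ r : ℕ}

lemma foldl_digits_eq_natVal (w : List ℕ) (a : ℕ) :
    w.foldl (fun acc b => ρ * acc + b) a = ρ ^ w.length * a + natVal ρ w := by
  induction w generalizing a with
  | nil => simp [natVal]
  | cons b w ih =>
    have hcons : natVal ρ (b :: w) = w.foldl (fun acc b => ρ * acc + b) (ρ * 0 + b) := rfl
    rw [List.foldl_cons, hcons, ih, ih, List.length_cons, pow_succ]
    ring

lemma natVal_append (w u : List ℕ) :
    natVal ρ (w ++ u) = ρ ^ u.length * natVal ρ w + natVal ρ u := by
  rw [natVal, List.foldl_append, foldl_digits_eq_natVal]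
  rfl

lemma intVal_append {w : List ℕ} (hw : w ≠ []) (u : List ℕ) :
    intVal ρ (w ++ u) = (ρ : ℤ) ^ u.length * intVal ρ w + natVal ρ u := by
  obtain ⟨b, w, rfl⟩ := List.exists_cons_of_ne_nil hw
  simp only [List.cons_append, intVal, natVal_append, List.length_append]
  push_cast
  split <;> ring

lemma intVec_append {w : List (Letter ρ r)} (hw : w ≠ []) (u : List (Letter ρ r)) :
    intVec ρ r (w ++ u) = (ρ : ℤ) ^ u.length • intVec ρ r w + natVec ρ r u := by
  funext i
  simp only [intVec, List.map_append]
  rw [intVal_append (by simpa using hw)]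
  simp [intVec, natVec]

lemma intVec_singleton (b : Letter ρ r) : intVec ρ r [b] = sgnLetter b := by
  funext i
  by_cases h : (b i : ℕ) = 0 <;> simp [intVec, intVal, natVal, sgnLetter, h]

lemma natVec_cons (b : Letter ρ r) (u : List (Letter ρ r)) :
    natVec ρ r (b :: u) = (ρ : ℤ) ^ u.length • letterInt b + natVec ρ r u := by
  funext i
  simp only [natVec, List.map_cons]
  rw [← List.singleton_append, natVal_append]
  simp [natVal, letterInt, natVec]

lemma exists_natVec_eq (hρ : 0 < ρ) (L : ℕ) (n : Fin r → ℕ) (hn : ∀ i, n i < ρ ^ L) :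
    ∃ u : List (Letter ρ r), u.length = L ∧ natVec ρ r u = fun i => (n i : ℤ) := by
  induction L generalizing n with
  | zero =>
    refine ⟨[], rfl, funext fun i => ?_⟩
    simp [natVec, natVal, Nat.lt_one_iff.1 (by simpa using hn i)]
  | succ L ih =>
    obtain ⟨u, hu, hun⟩ := ih (fun i => n i % ρ ^ L) fun i => Nat.mod_lt _ (by positivity)
    refine ⟨(fun i => ⟨n i / ρ ^ L, Nat.div_lt_of_lt_mul (pow_succ ρ L ▸ hn i)⟩) :: u,
      by simp [hu], ?_⟩
    rw [natVec_cons, hun, hu]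
    funext i
    simp only [Pi.add_apply, Pi.smul_apply, letterInt, smul_eq_mul]
    exact_mod_cast Nat.div_add_mod (n i) (ρ ^ L)

lemma exists_intVec_eq (hρ : 2 ≤ ρ) (a : Fin r → ℤ) :
    ∃ w : List (Letter ρ r), w ≠ [] ∧ intVec ρ r w = a := by
  set L := ∑ i, (a i).natAbs
  have ha : ∀ i, (a i).natAbs < ρ ^ L := fun i =>
    (single_le_sum (f := fun j => (a j).natAbs) (fun j _ => Nat.zero_le _) (mem_univ i)).trans_lt
      (Nat.lt_pow_self hρ)
  let sign : Letter ρ r := fun i => if a i < 0 then ⟨1, hρ⟩ else ⟨0, Nat.zero_lt_of_lt hρ⟩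
  obtain ⟨u, hu, hun⟩ := exists_natVec_eq (Nat.zero_lt_of_lt hρ) L
    (fun i => if a i < 0 then ρ ^ L - (a i).natAbs else (a i).natAbs)
    fun i => by split <;> have := ha i <;> omega
  refine ⟨sign :: u, List.cons_ne_nil _ _, ?_⟩
  rw [← List.singleton_append, intVec_append (List.cons_ne_nil _ _), intVec_singleton, hun, hu]
  funext i
  have := ha i
  by_cases hai : a i < 0
  · simp [sign, sgnLetter, hai, Nat.cast_sub this.le, abs_of_neg hai]
  · simp [sign, sgnLetter, hai]
    omega

end Digits

section Arithmetic

variable {r : ℕ}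

lemma tval_eq_dotProduct (k a : Fin r → ℤ) : tval k a = k ⬝ᵥ a := rfl

lemma tval_smul_add (k : Fin r → ℤ) (x : ℤ) (a b : Fin r → ℤ) :
    tval k (x • a + b) = x * tval k a + tval k b := by
  simp only [tval_eq_dotProduct, dotProduct_add, dotProduct_smul, smul_eq_mul]

lemma natCast_finset_gcd {ι : Type*} (s : Finset ι) (f : ι → ℕ) :
    ((s.gcd f : ℕ) : ℤ) = s.gcd fun i => (f i : ℤ) := by
  classical
  induction s using Finset.induction with
  | empty => simp
  | insert a s ha ih =>
    rw [gcd_insert, gcd_insert, ← ih, ← Int.coe_gcd, Int.gcd_natCast_natCast]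
    rfl

lemma exists_dotProduct_eq_one {k : Fin r → ℤ} (hgcd : gcdT k = 1) :
    ∃ e : Fin r → ℤ, k ⬝ᵥ e = 1 := by
  obtain ⟨g, hg⟩ := Finset.gcd_eq_sum_mul univ fun i => ((k i).natAbs : ℤ)
  refine ⟨fun i => (k i).sign * g i, ?_⟩
  rw [← natCast_finset_gcd, ← gcdT, hgcd, Nat.cast_one] at hg
  rw [hg]
  exact sum_congr rfl fun i _ => by rw [← Int.mul_sign_self]; ring

lemma posNorm_add_negNorm (k : Fin r → ℤ) : posNorm k + negNorm k = ∑ i, |k i| := by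
  rw [posNorm, negNorm, ← sum_add_distrib]
  exact sum_congr rfl fun i _ => max_zero_add_max_neg_zero_eq_abs_self (k i)

lemma dotProduct_ite_pos (k : Fin r → ℤ) (x y : ℤ) :
    k ⬝ᵥ (fun i => if 0 < k i then x else y) = posNorm k * x - negNorm k * y := by
  rw [posNorm, negNorm, sum_mul, sum_mul, ← sum_sub_distrib]
  refine sum_congr rfl fun i _ => ?_
  rcases lt_or_ge 0 (k i) with hk | hk
  · simp [hk, hk.le]
  · simp [not_lt.2 hk, hk]

lemma exists_tval_eq_of_mem_Icc (k e : Fin r → ℤ) (he : k ⬝ᵥ e = 1) {N T : ℤ}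
    (hlo : -negNorm k * N + (posNorm k + negNorm k) ^ 2 * ∑ i, |e i| ≤ T)
    (hhi : T ≤ posNorm k * N - (posNorm k + negNorm k) ^ 2 * ∑ i, |e i|) :
    ∃ n : Fin r → ℤ, (∀ i, 0 ≤ n i ∧ n i ≤ N) ∧ tval k n = T := by
  set P := posNorm k
  set Q := negNorm k
  set D := P + Q
  set E := ∑ i, |e i|
  have hD : 0 < D := by
    by_contra! hD
    have hk : ∀ i, k i = 0 := fun i => abs_eq_zero.1 <| le_antisymm
      ((single_le_sum (f := fun j => |k j|) (fun j _ => abs_nonneg _) (mem_univ i)).trans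
        (posNorm_add_negNorm k ▸ hD)) (abs_nonneg _)
    simp [dotProduct, hk] at he
  set M := D * E
  -- Along `l ↦ (l on positive coefficients, N - l on the others)` the value of `t` grows in
  -- steps of `D`; the Bézout vector `e` makes up the remainder `j < D`.
  set l := (T + Q * N) / D
  set j := (T + Q * N) % D
  have hlj : D * l + j = T + Q * N := Int.mul_ediv_add_emod _ _
  have hj : 0 ≤ j ∧ j < D := ⟨Int.emod_nonneg _ hD.ne', Int.emod_lt_of_pos _ hD⟩
  have hje : ∀ i, |j * e i| ≤ M := fun i => by
    rw [abs_mul, abs_of_nonneg hj.1]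
    exact mul_le_mul hj.2.le (single_le_sum (f := fun j => |e j|) (fun j _ => abs_nonneg _)
      (mem_univ i)) (abs_nonneg _) hD.le
  have hl : M ≤ l := (Int.le_ediv_iff_mul_le hD).2 (by linarith [show M * D = D ^ 2 * E by ring])
  have hl' : l ≤ N - M := (Int.ediv_le_iff_le_mul hD).2
    (by linarith [show (N - M) * D = P * N + Q * N - D ^ 2 * E by ring])
  refine ⟨(fun i => if 0 < k i then l else N - l) + j • e, fun i => ?_, ?_⟩
  · have := abs_le.1 (hje i)
    simp only [Pi.add_apply, Pi.smul_apply, smul_eq_mul]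
    split <;> constructor <;> linarith
  · rw [tval_eq_dotProduct, dotProduct_add, dotProduct_smul, dotProduct_ite_pos, he]
    change P * l - Q * (N - l) + j * 1 = T
    linarith

end Arithmetic

section Words

variable {ρ r : ℕ} {k e : Fin r → ℤ}

lemma exists_intVec_tval_eq (hρ : 2 ≤ ρ) (he : k ⬝ᵥ e = 1) (s : ℤ) :
    ∃ w : List (Letter ρ r), w ≠ [] ∧ tval k (intVec ρ r w) = s := by
  obtain ⟨w, hw, hwe⟩ := exists_intVec_eq hρ (s • e)
  exact ⟨w, hw, by rw [hwe, tval_eq_dotProduct, dotProduct_smul, he, smul_eq_mul, mul_one]⟩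

lemma exists_natVec_tval_eq (hρ : 2 ≤ ρ) (he : k ⬝ᵥ e = 1) (c : ℤ) {s : ℤ}
    (hs : s ∈ Ioo (-posNorm k) (negNorm k)) :
    ∃ u : List (Letter ρ r), tval k (natVec ρ r u) = c - (ρ : ℤ) ^ u.length * s := by
  obtain ⟨hs₁, hs₂⟩ := mem_Ioo.1 hs
  set P := posNorm k
  set Q := negNorm k
  set M := (P + Q) ^ 2 * ∑ i, |e i|
  have hP : 0 ≤ P := sum_nonneg fun i _ => le_max_right _ _
  have hQ : 0 ≤ Q := sum_nonneg fun i _ => le_max_right _ _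
  obtain ⟨L, hL⟩ := pow_unbounded_of_one_lt (|c| + P + Q + M) (by exact_mod_cast hρ : (1 : ℤ) < ρ)
  set R := (ρ : ℤ) ^ L
  have hR : 0 ≤ R := by positivity
  have hRs₁ : R * (1 - P) ≤ R * s := mul_le_mul_of_nonneg_left (by omega) hR
  have hRs₂ : R * s ≤ R * (Q - 1) := mul_le_mul_of_nonneg_left (by omega) hR
  obtain ⟨n, hn, hnT⟩ := exists_tval_eq_of_mem_Icc k e he (N := R - 1) (T := c - R * s)
    (by linarith [neg_abs_le c]) (by linarith [le_abs_self c])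
  obtain ⟨u, hu, hun⟩ := exists_natVec_eq (Nat.zero_lt_of_lt hρ) L (fun i => (n i).toNat)
    fun i => by have := hn i; zify [this.1]; omega
  refine ⟨u, ?_⟩
  rw [hun, hu, ← hnT]
  congr
  funext i
  exact Int.toNat_of_nonneg (hn i).1

end Words

lemma _root_.DFA.append_mem_accepts_iff_of_eval_eq {α σ : Type*} {M : DFA α σ}
    {w w' : List α} (h : M.eval w = M.eval w') (u : List α) :
    w ++ u ∈ M.accepts ↔ w' ++ u ∈ M.accepts := by
  change M.evalFrom M.start (w ++ u) ∈ M.accept ↔ M.evalFrom M.start (w' ++ u) ∈ M.accept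
  rw [DFA.evalFrom_of_append, DFA.evalFrom_of_append]
  exact Iff.of_eq (congrArg (M.evalFrom · u ∈ M.accept) h)

theorem stmt_8_general (ρ r : ℕ) (hρ : 2 ≤ ρ) (k : Fin r → ℤ)
    (hgcd : gcdT k = 1) (c : ℤ)
    (σ : Type*) [Fintype σ] (M : DFA (Letter ρ r) σ)
    (hM : DFARepresents ρ r M {a | tval k a = c}) :
    (Finset.Ioo (-posNorm k) (negNorm k)).card ≤ Fintype.card σ := by
  obtain ⟨e, he⟩ := exists_dotProduct_eq_one hgcd
  choose w hw_ne hw using exists_intVec_tval_eq (ρ := ρ) hρ he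
  rw [← Finset.card_univ]
  refine card_le_card_of_injOn (fun s => M.eval (w s)) (fun _ _ => mem_coe.2 (mem_univ _)) ?_
  intro s hs s' _ hss'
  obtain ⟨u, hu⟩ := exists_natVec_tval_eq hρ he c (mem_coe.1 hs)
  have hval : ∀ x, tval k (intVec ρ r (w x ++ u)) = (ρ : ℤ) ^ u.length * (x - s) + c := fun x => by
    rw [intVec_append (hw_ne x), tval_smul_add, hw, hu]
    ring
  have hacc : w s ++ u ∈ M.accepts := (hM _).2 ⟨by simp [hw_ne], by simp [hval]⟩
  have hacc' : tval k (intVec ρ r (w s' ++ u)) = c :=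
    ((hM _).1 ((DFA.append_mem_accepts_iff_of_eval_eq hss' u).1 hacc)).2
  simp only [hval, add_eq_right, mul_eq_zero, sub_eq_zero] at hacc'
  exact (hacc'.resolve_left (by positivity)).symm

/-- Every DFA representing `{a ∈ ℤ^r : t[a] = c}` (where `gcd(t) = 1`) has at least
`|S|` states, where `S = {s ∈ ℤ : −‖t‖⁺ < s < ‖t‖⁻}`. -/
theorem stmt_8 (ρ r : ℕ) (hρ : 2 ≤ ρ) (k : Fin r → ℤ) (hk : Homog k)
    (hgcd : gcdT k = 1) (c : ℤ)
    (σ : Type*) [Fintype σ] (M : DFA (Letter ρ r) σ)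
    (hM : DFARepresents ρ r M {a | tval k a = c}) :
    (Finset.Ioo (-posNorm k) (negNorm k)).card ≤ Fintype.card σ :=
  stmt_8_general ρ r hρ k hgcd c σ M hM

end Presburger
end
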